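/- Let L be a first-order language and let ψ be a quantifier-free L-formula with n free variables. Then the universal sentence ∀x₁ … ∀xₙ ψ(x₁,…,xₙ) holds in every finite nonempty L-structure if and only if it holds in every nonempty L-structure. (In particular, for universal sentences, finite classical validity coincides with classical validity.) -/
import Mathlib

open FirstOrder FirstOrder.Language

namespace UFVAux

variable {L : FirstOrder.Language} {M : Type*} [L.Structure M] {α : Type*}

/-- The set of values of all subterms of a term under an assignment. -/
def termVals (v : α → M) : L.Term α → Set M
  | .var i => {v i}
  | .func f ts =>
      insert (Structure.funMap f fun i => (ts i).realize v) (⋃ i, termVals v (ts i))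

theorem termVals_finite (v : α → M) (t : L.Term α) : (termVals v t).Finite := by
  induction t with
  | var i => exact Set.finite_singleton _
  | func f ts ih =>
      exact Set.Finite.insert _ (Set.finite_iUnion ih)

theorem realize_mem_termVals (v : α → M) (t : L.Term α) : t.realize v ∈ termVals v t := by
  cases t with
  | var i => exact rfl
  | func f ts => exact Set.mem_insert _ _

/-- The set of values of all terms occurring in a formula. -/
def fmlVals (v : α → M) : ∀ {k}, (Fin k → M) → L.BoundedFormula α k → Set M
  | _, _, .falsum => ∅
  | _, xs, .equal t₁ t₂ => termVals (Sum.elim v xs) t₁ ∪ termVals (Sum.elim v xs) t₂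
  | _, xs, .rel _ ts => ⋃ i, termVals (Sum.elim v xs) (ts i)
  | _, xs, .imp φ θ => fmlVals v xs φ ∪ fmlVals v xs θ
  | _, _, .all _ => ∅

theorem fmlVals_finite (v : α → M) {k} (xs : Fin k → M) (φ : L.BoundedFormula α k) :
    (fmlVals v xs φ).Finite := by
  induction φ with
  | falsum => exact Set.finite_empty
  | equal t₁ t₂ => exact (termVals_finite _ _).union (termVals_finite _ _)
  | rel R ts => exact Set.finite_iUnion fun i => termVals_finite _ _
  | imp φ θ ihφ ihθ => exact (ihφ _).union (ihθ _)
  | all φ ih => exact Set.finite_empty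

open Classical in
/-- Retraction of `M` onto a subset `S`. -/
noncomputable def retract (S : Set M) (s₀ : M) (h₀ : s₀ ∈ S) (m : M) : S :=
  if h : m ∈ S then ⟨m, h⟩ else ⟨s₀, h₀⟩

/-- A (usually finite) structure on a subset of `M`. -/
noncomputable def miniStructure (S : Set M) (s₀ : M) (h₀ : s₀ ∈ S) : L.Structure S where
  funMap f x := retract S s₀ h₀ (Structure.funMap f fun i => (x i : M))
  RelMap R x := Structure.RelMap R fun i => (x i : M)

theorem term_realize_coe (S : Set M) (s₀ : M) (h₀ : s₀ ∈ S) (v : α → M)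
    (vS : ∀ i, v i ∈ S) (t : L.Term α) (ht : termVals v t ⊆ S) :
    ((@Term.realize L S (miniStructure S s₀ h₀) α (fun i => ⟨v i, vS i⟩) t : S) : M)
      = t.realize v := by
  induction t with
  | var i => rfl
  | func f ts ih =>
      letI := miniStructure (L := L) S s₀ h₀
      have hsub : ∀ i, termVals v (ts i) ⊆ S := fun i =>
        (Set.subset_iUnion _ i).trans ((Set.subset_insert _ _).trans ht)
      have hmem : Structure.funMap f (fun i => (ts i).realize v) ∈ S :=
        ht (Set.mem_insert _ _)
      simp only [Term.realize_func]
      show ((retract S s₀ h₀ (Structure.funMap f fun i =>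
        ((Term.realize (fun i => (⟨v i, vS i⟩ : S)) (ts i) : S) : M)) : S) : M) = _
      have : (fun i => ((Term.realize (fun i => (⟨v i, vS i⟩ : S)) (ts i) : S) : M))
          = fun i => (ts i).realize v := funext fun i => ih i (hsub i)
      rw [this, retract, dif_pos hmem]

theorem fml_realize_iff (S : Set M) (s₀ : M) (h₀ : s₀ ∈ S) (v : α → M)
    (vS : ∀ i, v i ∈ S) {k} (xs : Fin k → M) (xsS : ∀ i, xs i ∈ S)
    (φ : L.BoundedFormula α k) (hφ : φ.IsQF) (hsub : fmlVals v xs φ ⊆ S) :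
    (@BoundedFormula.Realize L S (miniStructure S s₀ h₀) α k φ
      (fun i => ⟨v i, vS i⟩) (fun i => ⟨xs i, xsS i⟩)) ↔ φ.Realize v xs := by
  letI := miniStructure (L := L) S s₀ h₀
  have hw : ∀ i : α ⊕ Fin k, Sum.elim v xs i ∈ S := by
    intro i; cases i with
    | inl a => exact vS a
    | inr b => exact xsS b
  have helim : (Sum.elim (fun i => (⟨v i, vS i⟩ : S)) (fun i => (⟨xs i, xsS i⟩ : S)))
      = fun i => (⟨Sum.elim v xs i, hw i⟩ : S) := by
    funext i; cases i <;> rfl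
  induction hφ with
  | falsum => simp [BoundedFormula.Realize]
  | of_isAtomic h =>
      cases h with
      | equal t₁ t₂ =>
          have h₁ : termVals (Sum.elim v xs) t₁ ⊆ S := (Set.subset_union_left).trans hsub
          have h₂ : termVals (Sum.elim v xs) t₂ ⊆ S := (Set.subset_union_right).trans hsub
          simp only [BoundedFormula.realize_bdEqual]
          rw [helim]
          rw [← Subtype.coe_injective.eq_iff,
            term_realize_coe S s₀ h₀ _ hw t₁ h₁, term_realize_coe S s₀ h₀ _ hw t₂ h₂]
      | rel R ts =>
          have h' : ∀ i, termVals (Sum.elim v xs) (ts i) ⊆ S := fun i =>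
            (Set.subset_iUnion _ i).trans hsub
          simp only [BoundedFormula.realize_rel]
          rw [helim]
          show Structure.RelMap R (fun i => ((Term.realize
            (fun i => (⟨Sum.elim v xs i, hw i⟩ : S)) (ts i) : S) : M)) ↔ _
          have : (fun i => ((Term.realize (fun i => (⟨Sum.elim v xs i, hw i⟩ : S))
              (ts i) : S) : M)) = fun i => (ts i).realize (Sum.elim v xs) :=
            funext fun i => term_realize_coe S s₀ h₀ _ hw (ts i) (h' i)
          rw [this]
  | imp h₁ h₂ ih₁ ih₂ =>
      have hs₁ : fmlVals v xs _ ⊆ S := fun m hm => hsub (Set.mem_union_left _ hm)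
      have hs₂ : fmlVals v xs _ ⊆ S := fun m hm => hsub (Set.mem_union_right _ hm)
      simp only [BoundedFormula.realize_imp]
      exact imp_congr (ih₁ hs₁) (ih₂ hs₂)

end UFVAux

/-- For a quantifier-free formula `ψ` with `n` free variables, the universal
sentence `∀ x₁ … xₙ, ψ` holds in every finite nonempty structure iff it holds
in every nonempty structure. -/
theorem universal_finite_validity_iff_validity.{u}
    {L : FirstOrder.Language} {n : ℕ} (ψ : L.BoundedFormula Empty n)
    (hqf : ψ.IsQF) :
    (∀ (M : Type u) [L.Structure M] [Finite M] [Nonempty M], M ⊨ ψ.alls) ↔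
      (∀ (M : Type u) [L.Structure M] [Nonempty M], M ⊨ ψ.alls) := by
  constructor
  · intro h M _ _
    rw [Sentence.Realize, BoundedFormula.realize_alls]
    intro xs
    by_contra hne
    set v : Empty → M := default with hv
    set s₀ : M := Classical.arbitrary M with hs₀
    set S : Set M := insert s₀ (Set.range xs ∪ UFVAux.fmlVals v xs ψ) with hS
    have h₀ : s₀ ∈ S := Set.mem_insert _ _
    have hSfin : S.Finite :=
      (((Set.finite_range xs).union (UFVAux.fmlVals_finite v xs ψ)).insert _)
    haveI : Finite S := hSfin
    haveI : Nonempty S := ⟨⟨s₀, h₀⟩⟩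
    letI := UFVAux.miniStructure (L := L) S s₀ h₀
    have vS : ∀ i : Empty, v i ∈ S := fun i => i.elim
    have xsS : ∀ i, xs i ∈ S := fun i =>
      Set.mem_insert_of_mem _ (Set.mem_union_left _ ⟨i, rfl⟩)
    have hsub : UFVAux.fmlVals v xs ψ ⊆ S := fun m hm =>
      Set.mem_insert_of_mem _ (Set.mem_union_right _ hm)
    have hreal := h S
    rw [Sentence.Realize, BoundedFormula.realize_alls] at hreal
    have := (UFVAux.fml_realize_iff S s₀ h₀ v vS xs xsS ψ hqf hsub).mp
      (by
        have hd : (fun i => (⟨v i, vS i⟩ : S)) = (default : Empty → S) :=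
          funext fun i => i.elim
        rw [hd]
        exact hreal _)
    have hv' : v = (default : Empty → M) := rfl
    exact hne (by rw [hv'] at this ⊢; exact this)
  · intro h M _ _ _
    exact h M
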